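/- Let G=(V,E) be a twinless strongly connected directed graph. Then the 2-twinless block graph G^{2t} of G is a forest, i.e., it contains no cycle. -/

import Mathlib

/-- A directed graph on vertex type `V` is given by its edge relation `E`.
`restrictEdges E S` is the edge relation of the subgraph induced on `S`. -/
def restrictEdges {V : Type*} (E : V → V → Prop) (S : Set V) : V → V → Prop :=
  fun a b => E a b ∧ a ∈ S ∧ b ∈ S

/-- The induced subgraph on `S` is strongly connected: every vertex of `S` reaches
every vertex of `S` by a directed path staying inside `S`. -/
def StronglyConnectedOn {V : Type*} (E : V → V → Prop) (S : Set V) : Prop :=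
  ∀ ⦃x⦄, x ∈ S → ∀ ⦃y⦄, y ∈ S → Relation.ReflTransGen (restrictEdges E S) x y

/-- The induced subgraph on `S` is twinless strongly connected: it has a strongly
connected spanning subgraph (edge set `E'` inside `S`) with no pair of antiparallel
edges (if `(x, y) ∈ E'` then `(y, x) ∉ E'`). -/
def TwinlessSCOn {V : Type*} (E : V → V → Prop) (S : Set V) : Prop :=
  ∃ E' : V → V → Prop,
    (∀ a b, E' a b → E a b ∧ a ∈ S ∧ b ∈ S) ∧
    (∀ a b, E' a b → ¬ E' b a) ∧
    StronglyConnectedOn E' S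

/-- `C` is a strongly connected component of the subgraph induced on `S`:
a maximal subset of `S` whose induced subgraph is strongly connected. -/
def IsSCCWithin {V : Type*} (E : V → V → Prop) (S C : Set V) : Prop :=
  C ⊆ S ∧ StronglyConnectedOn E C ∧
    ∀ D : Set V, C ⊆ D → D ⊆ S → StronglyConnectedOn E D → D = C

/-- `C` is a twinless strongly connected component of the subgraph induced on `S`:
a maximal subset of `S` whose induced subgraph is twinless strongly connected. -/
def IsTSCCWithin {V : Type*} (E : V → V → Prop) (S C : Set V) : Prop :=
  C ⊆ S ∧ TwinlessSCOn E C ∧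
    ∀ D : Set V, C ⊆ D → D ⊆ S → TwinlessSCOn E D → D = C

/-- `x` and `y` lie in the same twinless strongly connected component of the
subgraph induced on `S`. -/
def SameTSCC {V : Type*} (E : V → V → Prop) (S : Set V) (x y : V) : Prop :=
  ∃ C : Set V, IsTSCCWithin E S C ∧ x ∈ C ∧ y ∈ C

/-- `x` and `y` lie in the same strongly connected component of the
subgraph induced on `S`. -/
def SameSCC {V : Type*} (E : V → V → Prop) (S : Set V) (x y : V) : Prop :=
  ∃ C : Set V, IsSCCWithin E S C ∧ x ∈ C ∧ y ∈ C

/-- The relation `x ≈ y` ("x 2t-related to y"): `x` and `y` are distinct and, for every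
vertex `w ∉ {x, y}`, the vertices `x, y` lie in the same twinless strongly connected
component of `G ∖ {w}`. -/
def Rel2t {V : Type*} (E : V → V → Prop) (x y : V) : Prop :=
  x ≠ y ∧ ∀ w : V, w ≠ x → w ≠ y → SameTSCC E (({w} : Set V)ᶜ) x y

/-- `x` and `y` are distinct and, for every vertex `w ∉ {x, y}`, the vertices `x, y`
lie in the same strongly connected component of `G ∖ {w}`. -/
def Rel2s {V : Type*} (E : V → V → Prop) (x y : V) : Prop :=
  x ≠ y ∧ ∀ w : V, w ≠ x → w ≠ y → SameSCC E (({w} : Set V)ᶜ) x y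

/-- A 2-twinless block: a maximal set `B` with `|B| ≥ 2` such that `x ≈ y`
for all distinct `x, y ∈ B`. -/
def Is2TwinlessBlock {V : Type*} (E : V → V → Prop) (B : Set V) : Prop :=
  B.Nontrivial ∧ (∀ ⦃x⦄, x ∈ B → ∀ ⦃y⦄, y ∈ B → x ≠ y → Rel2t E x y) ∧
    ∀ D : Set V, B ⊆ D → (∀ ⦃x⦄, x ∈ D → ∀ ⦃y⦄, y ∈ D → x ≠ y → Rel2t E x y) → D = B

/-- A 2-strong block: a maximal set `B` with `|B| ≥ 2` such that for all distinct
`x, y ∈ B` and every `u ∉ {x, y}`, the vertices `x, y` lie in the same strongly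
connected component of `G ∖ {u}`. -/
def Is2StrongBlock {V : Type*} (E : V → V → Prop) (B : Set V) : Prop :=
  B.Nontrivial ∧ (∀ ⦃x⦄, x ∈ B → ∀ ⦃y⦄, y ∈ B → x ≠ y → Rel2s E x y) ∧
    ∀ D : Set V, B ⊆ D → (∀ ⦃x⦄, x ∈ D → ∀ ⦃y⦄, y ∈ D → x ≠ y → Rel2s E x y) → D = B

/-- A twinless articulation point: a vertex whose removal increases the number of
twinless strongly connected components. -/
def IsTwinlessArticulationPoint {V : Type*} (E : V → V → Prop) (v : V) : Prop :=
  ({C : Set V | IsTSCCWithin E Set.univ C}).ncard <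
    ({C : Set V | IsTSCCWithin E (({v} : Set V)ᶜ) C}).ncard

/-- Adjacency between a block vertex `B` and an ordinary vertex `v` in the
2-twinless block graph: `B` is a 2-twinless block and there is another
2-twinless block `B'` with `B ∩ B' = {v}`. -/
def BlockVertexAdj {V : Type*} (E : V → V → Prop) (B : Set V) (v : V) : Prop :=
  Is2TwinlessBlock E B ∧
    ∃ B' : Set V, Is2TwinlessBlock E B' ∧ B' ≠ B ∧ B ∩ B' = {v}

/-- The 2-twinless block graph `G^{2t}`: an undirected simple graph whose vertices are
the 2-twinless blocks (left summand) and the vertices of `G` (right summand, only those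
belonging to at least two blocks are non-isolated), with an edge between block `B_i` and
vertex `v` whenever `B_i ∩ B_j = {v}` for some other block `B_j`. -/
def blockGraph {V : Type*} (E : V → V → Prop) : SimpleGraph (Set V ⊕ V) where
  Adj a b :=
    match a, b with
    | Sum.inl B, Sum.inr v => BlockVertexAdj E B v
    | Sum.inr v, Sum.inl B => BlockVertexAdj E B v
    | _, _ => False
  symm := ⟨by
    rintro (B | v) (B' | v') h
    · exact h.elim
    · exact h
    · exact h
    · exact h.elim⟩
  loopless := ⟨by
    rintro (B | v) h
    · exact h
    · exact h⟩

/-!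
Write a cycle of `G^{2t}` as `v₀, B₀, v₁, B₁, v₂, …, v₀` with distinct blocks. The twinless strongly
connected components of `G ∖ {w}` partition its vertices (two overlapping twinless strongly
connected sets have a twinless strongly connected union), so along a walk of `G^{2t}` avoiding `w`
the vertices of `G` met stay in one such component. For `w ≠ v₁` the vertices `v₀, v₂` are linked
through `v₁`, and for `w = v₁` through the rest of the cycle; hence `v₀ ≈ v₂` (or `v₀ = v₂`).
Maximality of `B₀` then puts `v₂ ∈ B₀`, and the distinct blocks `B₀, B₁` share `v₁` and `v₂`, which
maximality forbids.
-/

open Relation SimpleGraph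

section

variable {V : Type*} {E : V → V → Prop}

/-- An edge of `E₂` is kept only when its reverse is not an edge of `E₁`; a dropped edge is then
bypassed inside `C` by an `E₁`-path. -/
theorem TwinlessSCOn.union {C C' : Set V} (h : TwinlessSCOn E C) (h' : TwinlessSCOn E C')
    (hne : (C ∩ C').Nonempty) : TwinlessSCOn E (C ∪ C') := by
  obtain ⟨E₁, hE₁, tw₁, sc₁⟩ := h
  obtain ⟨E₂, hE₂, tw₂, sc₂⟩ := h'
  obtain ⟨z, hzC, hzC'⟩ := hne
  set F : V → V → Prop := fun a b => E₁ a b ∨ (E₂ a b ∧ ¬ E₁ b a)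
  refine ⟨F, ?_, ?_, ?_⟩
  · rintro a b (hab | ⟨hab, -⟩)
    · obtain ⟨hE, ha, hb⟩ := hE₁ a b hab
      exact ⟨hE, .inl ha, .inl hb⟩
    · obtain ⟨hE, ha, hb⟩ := hE₂ a b hab
      exact ⟨hE, .inr ha, .inr hb⟩
  · rintro a b (hab | ⟨hab, hnb⟩) (hba | ⟨hba, hna⟩)
    exacts [tw₁ a b hab hba, hna hab, hnb hba, tw₂ a b hab hba]
  have reach₁ : ∀ ⦃x⦄, x ∈ C → ∀ ⦃y⦄, y ∈ C → ReflTransGen (restrictEdges F (C ∪ C')) x y :=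
    fun x hx y hy => ReflTransGen.mono (fun a b ⟨hab, ha, hb⟩ => ⟨.inl hab, .inl ha, .inl hb⟩)
      _ _ (sc₁ hx hy)
  have reach₂ : ∀ ⦃x⦄, x ∈ C' → ∀ ⦃y⦄, y ∈ C' → ReflTransGen (restrictEdges F (C ∪ C')) x y := by
    refine fun x hx y hy => reflTransGen_closed (fun a b ⟨hab, ha, hb⟩ => ?_) _ _ (sc₂ hx hy)
    by_cases hba : E₁ b a
    · exact reach₁ (hE₁ b a hba).2.2 (hE₁ b a hba).2.1
    · exact .single ⟨.inr ⟨hab, hba⟩, .inr ha, .inr hb⟩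
  rintro x (hx | hx) y (hy | hy)
  exacts [reach₁ hx hy, (reach₁ hx hzC).trans (reach₂ hzC' hy),
    (reach₂ hx hzC').trans (reach₁ hzC hy), reach₂ hx hy]

theorem IsTSCCWithin.eq_of_inter_nonempty {S C C' : Set V} (h : IsTSCCWithin E S C)
    (h' : IsTSCCWithin E S C') (hne : (C ∩ C').Nonempty) : C = C' := by
  have hU := h.2.1.union h'.2.1 hne
  have hUS := Set.union_subset h.1 h'.1
  exact (h.2.2 _ Set.subset_union_left hUS hU).symm.trans
    (h'.2.2 _ Set.subset_union_right hUS hU)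

theorem SameTSCC.symm {S : Set V} {x y : V} : SameTSCC E S x y → SameTSCC E S y x :=
  fun ⟨C, hC, hx, hy⟩ => ⟨C, hC, hy, hx⟩

theorem SameTSCC.trans {S : Set V} {x y z : V} :
    SameTSCC E S x y → SameTSCC E S y z → SameTSCC E S x z :=
  fun ⟨C, hC, hx, hy⟩ ⟨_, hC', hy', hz⟩ =>
    ⟨C, hC, hx, (hC.eq_of_inter_nonempty hC' ⟨y, hy, hy'⟩).symm ▸ hz⟩

theorem Rel2t.symm {x y : V} (h : Rel2t E x y) : Rel2t E y x :=
  ⟨h.1.symm, fun w hwy hwx => (h.2 w hwx hwy).symm⟩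

instance : Std.Symm (Rel2t E) := ⟨fun _ _ => Rel2t.symm⟩

theorem Rel2t.trans_of_sameTSCC {a b c : V} (hab : Rel2t E a b) (hbc : Rel2t E b c) (hac : a ≠ c)
    (h : SameTSCC E {b}ᶜ a c) : Rel2t E a c := by
  refine ⟨hac, fun w hwa hwc => ?_⟩
  by_cases hwb : w = b
  · exact hwb ▸ h
  · exact (hab.2 w hwa hwb).trans (hbc.2 w hwb hwc)

theorem Set.Pairwise.rel2t_union {B S : Set V} (hB : B.Pairwise (Rel2t E))
    (hS : S.Pairwise (Rel2t E)) {p q : V} (hp : p ∈ B ∩ S) (hq : q ∈ B ∩ S) (hpq : p ≠ q) :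
    (B ∪ S).Pairwise (Rel2t E) := by
  refine Set.pairwise_union_of_symm.2 ⟨hB, hS, fun x hx y hy hxy => ?_⟩
  by_cases hyB : y ∈ B
  · exact hB hx hyB hxy
  by_cases hxS : x ∈ S
  · exact hS hxS hy hxy
  refine ⟨hxy, fun w hwx hwy => ?_⟩
  obtain ⟨v, ⟨hvB, hvS⟩, hvw⟩ : ∃ v ∈ B ∩ S, w ≠ v := by
    by_cases hwp : w = p
    · exact ⟨q, hq, hwp ▸ hpq⟩
    · exact ⟨p, hp, hwp⟩
  exact ((hB hx hvB (ne_of_mem_of_not_mem hvS hxS).symm).2 w hwx hvw).trans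
    ((hS hvS hy (ne_of_mem_of_not_mem hvB hyB)).2 w hvw hwy)

theorem Is2TwinlessBlock.pairwise {B : Set V} (hB : Is2TwinlessBlock E B) :
    B.Pairwise (Rel2t E) :=
  hB.2.1

theorem Is2TwinlessBlock.subset_of_pairwise {B S : Set V} (hB : Is2TwinlessBlock E B)
    (hS : S.Pairwise (Rel2t E)) {p q : V} (hp : p ∈ B ∩ S) (hq : q ∈ B ∩ S) (hpq : p ≠ q) :
    S ⊆ B :=
  Set.subset_union_right.trans
    (hB.2.2 _ Set.subset_union_left (hB.pairwise.rel2t_union hS hp hq hpq)).subset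

theorem Is2TwinlessBlock.eq_of_mem_of_mem {B B' : Set V} (hB : Is2TwinlessBlock E B)
    (hB' : Is2TwinlessBlock E B') {p q : V} (hp : p ∈ B ∩ B') (hq : q ∈ B ∩ B') (hpq : p ≠ q) :
    B = B' :=
  (hB'.subset_of_pairwise hB.pairwise ⟨hp.2, hp.1⟩ ⟨hq.2, hq.1⟩ hpq).antisymm
    (hB.subset_of_pairwise hB'.pairwise hp hq hpq)

theorem BlockVertexAdj.is2TwinlessBlock {B : Set V} {v : V} (h : BlockVertexAdj E B v) :
    Is2TwinlessBlock E B :=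
  h.1

theorem BlockVertexAdj.mem {B : Set V} {v : V} (h : BlockVertexAdj E B v) : v ∈ B :=
  match h with
  | ⟨_, _, _, _, hBB'⟩ => (hBB'.ge (Set.mem_singleton v)).1

def blockGraphCarrier : Set V ⊕ V → Set V :=
  Sum.elim id fun v => {v}

theorem reflGen_sameTSCC_of_walk {x y : Set V ⊕ V} {b w : V} (p : (blockGraph E).Walk x y)
    (hy : y = .inr b) (hw : .inr w ∉ p.support) {a : V} (ha : a ∈ blockGraphCarrier x)
    (haw : a ≠ w) : ReflGen (SameTSCC E {w}ᶜ) a b := by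
  induction p generalizing a with
  | nil =>
    subst hy
    exact (Set.mem_singleton_iff.1 ha) ▸ .refl
  | @cons x z y h p ih =>
    rw [Walk.support_cons, List.mem_cons, not_or] at hw
    rcases x with B | a' <;> rcases z with B' | c
    · exact h.elim
    · have hcw : c ≠ w := fun hcw => hw.2 (hcw ▸ p.start_mem_support)
      have hcb := ih hy hw.2 (Set.mem_singleton c) hcw
      obtain rfl | hac := eq_or_ne a c
      · exact hcb
      have hac : SameTSCC E {w}ᶜ a c := (h.is2TwinlessBlock.pairwise ha h.mem hac).2 w haw.symm hcw.symm
      rcases hcb with _ | hcb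
      exacts [.single hac, .single (hac.trans hcb)]
    · obtain rfl : a = a' := ha
      exact ih hy hw.2 h.mem haw
    · exact h.elim

theorem Is2TwinlessBlock.not_isPath_of_notMem_support {B : Set V} (hB : Is2TwinlessBlock E B)
    {a b : V} (ha : a ∈ B) (hb : b ∈ B) (hab : a ≠ b) (q : (blockGraph E).Walk (.inr b) (.inr a))
    (hBq : .inl B ∉ q.support) : ¬ q.IsPath := by
  intro hq
  cases q with
  | nil => exact hab rfl
  | @cons _ x _ h₁ q₁ =>
    cases x with
    | inr => exact h₁.elim
    | inl B' =>
      cases q₁ with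
      | @cons _ y _ h₂ q₂ =>
        cases y with
        | inl => exact h₂.elim
        | inr b' =>
          simp only [Walk.cons_isPath_iff, Walk.support_cons, List.mem_cons] at hq hBq
          have hBB' : B ≠ B' := fun h => hBq (.inr (.inl (congrArg _ h)))
          have hbq₂ : .inr b ∉ q₂.support := fun h => hq.2 (.inr h)
          have hbb' : b ≠ b' := by
            rintro rfl
            exact hbq₂ q₂.start_mem_support
          have hB' := h₁.is2TwinlessBlock
          have hbB' := h₁.mem
          have hb'B' := h₂.mem
          have hb'B : b' ∈ B := by
            obtain rfl | hb'a := eq_or_ne b' a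
            · exact ha
            -- removing `b` is handled by the rest of the cycle, any other vertex by `B'` and `B`
            have hrel : Rel2t E b' a := by
              rcases reflGen_sameTSCC_of_walk q₂ rfl hbq₂ (Set.mem_singleton b') hbb'.symm
                with _ | h
              exacts [(hb'a rfl).elim, (hB'.pairwise hb'B' hbB' hbb'.symm).trans_of_sameTSCC
                (hB.pairwise hb ha hab.symm) hb'a h]
            have hS : ({a, b, b'} : Set V).Pairwise (Rel2t E) := by
              refine Set.pairwise_insert_of_symm.2
                ⟨Set.pairwise_pair_of_symm.2 fun _ => hB'.pairwise hbB' hb'B' hbb', ?_⟩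
              rintro x (rfl | rfl) hx
              exacts [hB.pairwise ha hb hx, hrel.symm]
            exact hB.subset_of_pairwise hS ⟨ha, by simp⟩ ⟨hb, by simp⟩ hab (by simp)
          exact hBB' (hB.eq_of_mem_of_mem hB' ⟨hb, hbB'⟩ ⟨hb'B, hb'B'⟩ hbb')

theorem blockGraph_not_isCycle_inr {a : V} (c : (blockGraph E).Walk (.inr a) (.inr a)) :
    ¬ c.IsCycle := by
  intro hc
  cases c with
  | nil => exact hc.ne_nil rfl
  | @cons _ x _ h₁ p =>
    cases x with
    | inr => exact h₁.elim
    | inl B =>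
      cases p with
      | @cons _ y _ h₂ q =>
        cases y with
        | inl => exact h₂.elim
        | inr b =>
          rw [Walk.cons_isCycle_iff, Walk.cons_isPath_iff] at hc
          have hab : a ≠ b := by
            rintro rfl
            rw [(Walk.isPath_iff_nil.1 hc.1.1).eq_nil] at hc
            simp [Sym2.eq_swap] at hc
          exact h₁.is2TwinlessBlock.not_isPath_of_notMem_support h₁.mem h₂.mem hab q hc.1.2 hc.1.1

end

theorem blockGraph_isAcyclic_general
    {V : Type*} (E : V → V → Prop) :
    (blockGraph E).IsAcyclic := by
  classical
  rintro (B | v) c hc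
  · cases c with
    | nil => exact hc.ne_nil rfl
    | @cons _ x _ h p =>
      cases x with
      | inl => exact h.elim
      | inr b =>
        have hb : Sum.inr b ∈ (Walk.cons h p).support := by simp
        exact blockGraph_not_isCycle_inr _ (hc.rotate hb)
  · exact blockGraph_not_isCycle_inr c hc

/-- The 2-twinless block graph of a twinless strongly connected directed graph is a
forest, i.e., it contains no cycle. -/
theorem blockGraph_isAcyclic
    {V : Type*} [Fintype V] (E : V → V → Prop)
    (hG : TwinlessSCOn E Set.univ) :
    (blockGraph E).IsAcyclic :=
  blockGraph_isAcyclic_general E
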